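/- Sauer–Shelah lemma: if a class P of Boolean-valued functions has VC dimension d, then for every finite set S of m points, the number of realizable dichotomies of S is at most the sum over i = 0 to d of binomial(m, i). -/

import Mathlib

/-!
Encode each dichotomy of `S` by the subset of `S` it sends to `true`. A set shattered by this
trace family is shattered by `P`, so the family has VC dimension at most `d`, and Mathlib's
Sauer–Shelah lemma for set families (via Pajor's bound `#𝒜 ≤ #𝒜.shatterer`) gives the bound.
-/

/-- The realizable dichotomies of a finite set `S` by a class `P` of Boolean-valued functions. -/
def dichotomies {X : Type*} (P : Set (X → Bool)) (S : Finset X) : Set (↥S → Bool) :=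
  {f | ∃ p ∈ P, ∀ x : ↥S, p x = f x}

/-- `P` shatters a finite set `S`: every dichotomy of `S` is realized by some member of `P`. -/
def Shatters {X : Type*} (P : Set (X → Bool)) (S : Finset X) : Prop :=
  ∀ f : X → Bool, ∃ p ∈ P, ∀ x ∈ S, p x = f x

open Finset

lemma Finset.vcDim_le_of_forall_not_shatters {α : Type*} [DecidableEq α]
    {𝒜 : Finset (Finset α)} {d : ℕ} (h : ∀ s : Finset α, #s = d + 1 → ¬ 𝒜.Shatters s) :
    𝒜.vcDim ≤ d := by
  refine Finset.sup_le fun s hs ↦ ?_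
  by_contra! hlt
  obtain ⟨t, hts, htcard⟩ := exists_subset_card_eq hlt
  exact h t htcard ((mem_shatterer.1 hs).mono_right hts)

section Trace

variable {ι : Type*} [Fintype ι]

def boolSupport (f : ι → Bool) : Finset ι := univ.filter fun x ↦ f x

@[simp] lemma mem_boolSupport {f : ι → Bool} {x : ι} : x ∈ boolSupport f ↔ f x = true := by
  simp [boolSupport]

lemma boolSupport_injective : Function.Injective (boolSupport (ι := ι)) := fun f g hfg ↦
  funext fun x ↦ Bool.eq_iff_iff.2 <| by simpa using congrArg (x ∈ ·) hfg

end Trace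

section Dichotomies

noncomputable def traceFamily {X : Type*} [DecidableEq X] (P : Set (X → Bool)) (S : Finset X) :
    Finset (Finset ↥S) :=
  (dichotomies P S).toFinite.toFinset.image boolSupport

variable {X : Type*} [DecidableEq X] {P : Set (X → Bool)} {S : Finset X}

lemma card_dichotomies_eq_card_traceFamily : Nat.card (dichotomies P S) = #(traceFamily P S) := by
  rw [traceFamily, card_image_of_injective _ boolSupport_injective, Nat.card_coe_set_eq,
    Set.ncard_eq_toFinset_card]

lemma shatters_map_of_traceFamily_shatters {s : Finset ↥S}
    (hs : (traceFamily P S).Shatters s) : Shatters P (s.map (Function.Embedding.subtype _)) := by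
  intro f
  obtain ⟨u, hu, hsu⟩ := hs (filter_subset (fun x : ↥S ↦ f x = true) s)
  obtain ⟨g, hg, rfl⟩ := mem_image.1 hu
  obtain ⟨p, hp, hpg⟩ := (Set.Finite.mem_toFinset _).1 hg
  refine ⟨p, hp, ?_⟩
  simp only [mem_map, Function.Embedding.coe_subtype]
  rintro _ ⟨x, hx, rfl⟩
  have hmem := congrArg (x ∈ ·) hsu
  simp only [mem_inter, mem_boolSupport, mem_filter, hx, true_and, eq_iff_iff] at hmem
  rw [hpg, Bool.eq_iff_iff, hmem]

end Dichotomies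

/-- Sauer–Shelah lemma. -/
theorem stmt_4 {X : Type*} (P : Set (X → Bool)) (d : ℕ)
    (hVC : ∀ S : Finset X, S.card = d + 1 → ¬ Shatters P S)
    (m : ℕ) (S : Finset X) (hS : S.card = m) :
    Nat.card (dichotomies P S) ≤ ∑ i ∈ Finset.range (d + 1), m.choose i := by
  classical
  have hdim : (traceFamily P S).vcDim ≤ d :=
    vcDim_le_of_forall_not_shatters fun s hs hshat ↦
      hVC _ (by rw [card_map, hs]) (shatters_map_of_traceFamily_shatters hshat)
  calc Nat.card (dichotomies P S) = #(traceFamily P S) := card_dichotomies_eq_card_traceFamily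
    _ ≤ #(traceFamily P S).shatterer := card_le_card_shatterer _
    _ ≤ ∑ k ∈ Iic (traceFamily P S).vcDim, (Fintype.card ↥S).choose k :=
      card_shatterer_le_sum_vcDim
    _ ≤ ∑ i ∈ range (d + 1), m.choose i := by
      rw [Fintype.card_coe, hS, Nat.range_succ_eq_Iic]
      exact sum_le_sum_of_subset (Iic_subset_Iic.2 hdim)
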